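/- arXiv:1706.00951 — 5 statements merged into one kernel-verified Lean document; each statement's English description precedes it below -/
import Mathlib

section
/- Let A be a nilpotent left Leibniz algebra over ℂ with dim Leib(A) = 1. Then Leib(A) ⊆ Z(A). -/
/-- The left Leibniz identity for a bilinear bracket:
`[a,[b,c]] = [[a,b],c] + [b,[a,c]]`. -/
def IsLeibnizBracket {K A : Type*} [CommRing K] [AddCommGroup A] [Module K A]
    (br : A →ₗ[K] A →ₗ[K] A) : Prop :=
  ∀ a b c : A, br a (br b c) = br (br a b) c + br b (br a c)

/-- The span of all brackets `[s,t]` with `s ∈ S`, `t ∈ T`. -/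
def bracketSpan {K A : Type*} [CommRing K] [AddCommGroup A] [Module K A]
    (br : A →ₗ[K] A →ₗ[K] A) (S T : Submodule K A) : Submodule K A :=
  Submodule.span K {x | ∃ s ∈ S, ∃ t ∈ T, br s t = x}

/-- Lower central series: `lcs br n = A^(n+1)`, i.e. `lcs br 0 = A¹ = A` and
`lcs br (n+1) = [A, lcs br n]`. -/
def lcs {K A : Type*} [CommRing K] [AddCommGroup A] [Module K A]
    (br : A →ₗ[K] A →ₗ[K] A) : ℕ → Submodule K A
  | 0 => ⊤
  | n + 1 => bracketSpan br ⊤ (lcs br n)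

/-- `Leib(A)`: the span of all squares `[a,a]`. -/
def leibIdeal {K A : Type*} [CommRing K] [AddCommGroup A] [Module K A]
    (br : A →ₗ[K] A →ₗ[K] A) : Submodule K A :=
  Submodule.span K {x | ∃ a : A, br a a = x}

/-- The center `Z(A) = {x : [a,x] = 0 = [x,a] for all a}`. -/
def leibnizCenter {K A : Type*} [CommRing K] [AddCommGroup A] [Module K A]
    (br : A →ₗ[K] A →ₗ[K] A) : Submodule K A where
  carrier := {x | ∀ a : A, br a x = 0 ∧ br x a = 0}
  add_mem' := by
    intro x y hx hy a
    constructor <;>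
      simp [map_add, LinearMap.add_apply, (hx a).1, (hx a).2, (hy a).1, (hy a).2]
  zero_mem' := by
    intro a
    constructor <;> simp
  smul_mem' := by
    intro c x hx a
    constructor <;>
      simp [map_smul, LinearMap.smul_apply, (hx a).1, (hx a).2]

/-- Two-sided ideal of a Leibniz algebra. -/
def IsLeibnizIdeal {K A : Type*} [CommRing K] [AddCommGroup A] [Module K A]
    (br : A →ₗ[K] A →ₗ[K] A) (I : Submodule K A) : Prop :=
  ∀ a : A, ∀ x ∈ I, br a x ∈ I ∧ br x a ∈ I

/-!
Squares are right annihilators: the Leibniz identity with `a = b` gives `[[a,a],c] = 0`.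
Polarizing `[a,[b,b]] = [[a,b],b] + [b,[a,b]]` shows that `Leib(A)` is stable under left
multiplication, so each `[a, -]` acts on the line `Leib(A)` by a scalar. A nonzero scalar
would make `Leib(A) ⊆ [A, Leib(A)]`, pushing `Leib(A)` into every term of the lower central
series; nilpotency forces the scalar to vanish.
-/

section LowerCentralSeries

variable {K A : Type*} [CommRing K] [AddCommGroup A] [Module K A]

theorem bracketSpan_mono_right (br : A →ₗ[K] A →ₗ[K] A) (S : Submodule K A)
    {T T' : Submodule K A} (h : T ≤ T') : bracketSpan br S T ≤ bracketSpan br S T' :=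
  Submodule.span_mono fun _ ⟨s, hs, t, ht, hst⟩ => ⟨s, hs, t, h ht, hst⟩

theorem le_lcs_of_le_bracketSpan {br : A →ₗ[K] A →ₗ[K] A} {S : Submodule K A}
    (hS : S ≤ bracketSpan br ⊤ S) : ∀ n, S ≤ lcs br n
  | 0 => le_top
  | n + 1 => hS.trans (bracketSpan_mono_right br ⊤ (le_lcs_of_le_bracketSpan hS n))

theorem eq_bot_of_le_bracketSpan {br : A →ₗ[K] A →ₗ[K] A} (hnil : ∃ m, lcs br m = ⊥)
    {S : Submodule K A} (hS : S ≤ bracketSpan br ⊤ S) : S = ⊥ := by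
  obtain ⟨m, hm⟩ := hnil
  exact eq_bot_iff.mpr (hm ▸ le_lcs_of_le_bracketSpan hS m)

end LowerCentralSeries

theorem bracket_eq_zero_of_finrank_eq_one {K A : Type*} [Field K] [AddCommGroup A]
    [Module K A] {br : A →ₗ[K] A →ₗ[K] A} (hnil : ∃ m, lcs br m = ⊥) {L : Submodule K A}
    (hL : Module.finrank K L = 1) {a : A} (haL : ∀ x ∈ L, br a x ∈ L) {x : A} (hx : x ∈ L) :
    br a x = 0 := by
  obtain ⟨⟨e, he⟩, -, hspan⟩ := finrank_eq_one_iff'.mp hL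
  have hsmul : ∀ y ∈ L, ∃ c : K, c • e = y := fun y hy =>
    (hspan ⟨y, hy⟩).imp fun _ hc => congrArg Subtype.val hc
  obtain ⟨c, hc⟩ := hsmul _ (haL e he)
  obtain ⟨d, rfl⟩ := hsmul x hx
  rcases eq_or_ne c 0 with rfl | hc0
  · rw [map_smul, ← hc, zero_smul, smul_zero]
  · have hLsurj : L ≤ bracketSpan br ⊤ L := by
      intro y hy
      obtain ⟨d', rfl⟩ := hsmul y hy
      refine Submodule.subset_span ⟨a, trivial, (d' / c) • e, L.smul_mem _ he, ?_⟩
      rw [map_smul, ← hc, smul_smul, div_mul_cancel₀ _ hc0]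
    rw [eq_bot_of_le_bracketSpan hnil hLsurj, finrank_bot] at hL
    exact absurd hL zero_ne_one

theorem bracket_add_bracket_swap_mem_leibIdeal {K A : Type*} [CommRing K] [AddCommGroup A]
    [Module K A] (br : A →ₗ[K] A →ₗ[K] A) (u v : A) : br u v + br v u ∈ leibIdeal br := by
  have hpolar : br u v + br v u = br (u + v) (u + v) - br u u - br v v := by
    simp only [map_add, LinearMap.add_apply]
    abel
  rw [hpolar]
  exact sub_mem (sub_mem (Submodule.subset_span ⟨_, rfl⟩) (Submodule.subset_span ⟨_, rfl⟩))
    (Submodule.subset_span ⟨_, rfl⟩)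

namespace IsLeibnizBracket

variable {K A : Type*} [CommRing K] [AddCommGroup A] [Module K A] {br : A →ₗ[K] A →ₗ[K] A}

theorem bracket_self_bracket_eq_zero (hbr : IsLeibnizBracket br) (a c : A) :
    br (br a a) c = 0 :=
  right_eq_add.mp (hbr a a c)

theorem leibIdeal_le_ker (hbr : IsLeibnizBracket br) : leibIdeal br ≤ LinearMap.ker br :=
  Submodule.span_le.mpr <| by
    rintro _ ⟨a, rfl⟩
    exact LinearMap.ext (hbr.bracket_self_bracket_eq_zero a)

theorem bracket_mem_leibIdeal (hbr : IsLeibnizBracket br) (a : A) {x : A}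
    (hx : x ∈ leibIdeal br) : br a x ∈ leibIdeal br := by
  refine (Submodule.span_le (p := (leibIdeal br).comap (br a))).mpr ?_ hx
  rintro _ ⟨b, rfl⟩
  change br a (br b b) ∈ leibIdeal br
  rw [hbr a b b]
  exact bracket_add_bracket_swap_mem_leibIdeal br (br a b) b

end IsLeibnizBracket

/-- If `A` is a nilpotent left Leibniz algebra over `ℂ` with
`dim Leib(A) = 1`, then `Leib(A) ⊆ Z(A)`. -/
theorem leibIdeal_le_center_of_dim_one
    {A : Type*} [AddCommGroup A] [Module ℂ A]
    (br : A →ₗ[ℂ] A →ₗ[ℂ] A) (hbr : IsLeibnizBracket br)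
    (hnil : ∃ m : ℕ, lcs br m = ⊥)
    (hleib : Module.finrank ℂ ↥(leibIdeal br) = 1) :
    leibIdeal br ≤ leibnizCenter br := by
  intro x hx a
  exact ⟨bracket_eq_zero_of_finrank_eq_one hnil hleib (fun _ => hbr.bracket_mem_leibIdeal a) hx,
    LinearMap.congr_fun (hbr.leibIdeal_le_ker hx) a⟩
end

section
/- Let A be an n-dimensional nilpotent left Leibniz algebra over ℂ with dim Z(A) = n − k and dim Leib(A) = 1. Then dim A² ≤ (k² − k + 2)/2. -/
/-!
A bracket with a central argument vanishes, so `A² = [W, W]` for a complement `W` of `Z(A)`,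
and `dim W = k`. Modulo `Leib(A)` the bracket is alternating, since `[a, a] ∈ Leib(A)`; hence the
image of `A²` in `A / Leib(A)` is spanned by the `k.choose 2` brackets `[wᵢ, wⱼ]`, `i < j`, of
basis vectors of `W`, and `dim A² ≤ k.choose 2 + dim Leib(A)`.
-/

open Module Submodule

section FinrankMap

variable {K V V₂ : Type*} [Field K] [AddCommGroup V] [Module K V] [AddCommGroup V₂] [Module K V₂]

theorem Submodule.finrank_le_finrank_map_add_finrank_ker [FiniteDimensional K V]
    (f : V →ₗ[K] V₂) (S : Submodule K V) :
    finrank K S ≤ finrank K (S.map f) + finrank K (LinearMap.ker f) := by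
  have hker : finrank K (LinearMap.ker (f.domRestrict S)) ≤ finrank K (LinearMap.ker f) := by
    rw [LinearMap.ker_domRestrict, ← Submodule.finrank_map_subtype_eq]
    exact Submodule.finrank_mono (Submodule.map_comap_le _ _)
  have := (f.domRestrict S).finrank_range_add_finrank_ker
  rw [LinearMap.range_domRestrict] at this
  omega

end FinrankMap

section Alternating

variable {K V P : Type*} [Field K] [AddCommGroup V] [Module K V] [AddCommGroup P] [Module K P]

theorem LinearMap.IsAlt.finrank_map₂_le_choose_two {f : V →ₗ[K] V →ₗ[K] P} (hf : f.IsAlt)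
    (W : Submodule K V) [FiniteDimensional K W] :
    finrank K (map₂ f W W) ≤ (finrank K W).choose 2 := by
  set b := Module.finBasis K W
  let g : {p : Fin (finrank K W) × Fin (finrank K W) // p.1 < p.2} → P :=
    fun p => f (b p.1.1) (b p.1.2)
  have hW : span K (Set.range fun i => (b i : V)) = W := by
    rw [Set.range_comp' Subtype.val b, ← W.coe_subtype, ← Submodule.map_span, b.span_eq,
      Submodule.map_top, Submodule.range_subtype]
  have hspan : map₂ f W W ≤ span K (Set.range g) := by
    conv_lhs => rw [← hW]
    rw [map₂_span_span, span_le]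
    rintro _ ⟨_, ⟨i, rfl⟩, _, ⟨j, rfl⟩, rfl⟩
    simp only [SetLike.mem_coe]
    rcases lt_trichotomy i j with hij | rfl | hji
    · exact subset_span ⟨⟨(i, j), hij⟩, rfl⟩
    · exact hf.self_eq_zero _ ▸ zero_mem _
    · rw [← hf.neg]
      exact neg_mem (subset_span ⟨⟨(j, i), hji⟩, rfl⟩)
  have := FiniteDimensional.span_of_finite K (Set.finite_range g)
  calc finrank K (map₂ f W W) ≤ finrank K (span K (Set.range g)) := Submodule.finrank_mono hspan
    _ ≤ Fintype.card {p : Fin (finrank K W) × Fin (finrank K W) // p.1 < p.2} :=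
      finrank_range_le_card g
    _ = (finrank K W).choose 2 := by
      rw [Fintype.card_subtype, Fintype.card_product_filter_lt, Fintype.card_fin]

end Alternating

section Leibniz

variable {K A : Type*} [CommRing K] [AddCommGroup A] [Module K A] (br : A →ₗ[K] A →ₗ[K] A)

theorem lcs_one_eq_map₂_top : lcs br 1 = map₂ br ⊤ ⊤ := by
  rw [map₂_eq_span_image2]
  rfl

theorem map₂_leibnizCenter_left (S : Submodule K A) : map₂ br (leibnizCenter br) S = ⊥ :=
  eq_bot_iff.2 <| map₂_le.2 fun _ hz s _ => (hz s).2 ▸ zero_mem _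

theorem map₂_leibnizCenter_right (S : Submodule K A) : map₂ br S (leibnizCenter br) = ⊥ :=
  eq_bot_iff.2 <| map₂_le.2 fun s _ _ hz => (hz s).1 ▸ zero_mem _

theorem lcs_one_eq_map₂_of_isCompl {W : Submodule K A} (hW : IsCompl (leibnizCenter br) W) :
    lcs br 1 = map₂ br W W := by
  rw [lcs_one_eq_map₂_top, ← hW.sup_eq_top, map₂_sup_left, map₂_sup_right, map₂_sup_right,
    map₂_leibnizCenter_left, map₂_leibnizCenter_left, map₂_leibnizCenter_right]
  simp

theorem isAlt_compr₂_mkQ_leibIdeal : (br.compr₂ (leibIdeal br).mkQ).IsAlt :=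
  fun a => (Quotient.mk_eq_zero _).2 (subset_span ⟨a, rfl⟩)

end Leibniz

theorem finrank_lcs_one_le_choose_two_add {K A : Type*} [Field K] [AddCommGroup A] [Module K A]
    [FiniteDimensional K A] (br : A →ₗ[K] A →ₗ[K] A) :
    finrank K (lcs br 1) ≤
      (finrank K A - finrank K (leibnizCenter br)).choose 2 + finrank K (leibIdeal br) := by
  obtain ⟨W, hW⟩ := (leibnizCenter br).exists_isCompl
  rw [← finrank_add_eq_of_isCompl hW, Nat.add_sub_cancel_left]
  calc finrank K (lcs br 1)
      ≤ finrank K ((lcs br 1).map (leibIdeal br).mkQ) +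
          finrank K (LinearMap.ker (leibIdeal br).mkQ) :=
        finrank_le_finrank_map_add_finrank_ker _ _
    _ = finrank K (map₂ (br.compr₂ (leibIdeal br).mkQ) W W) + finrank K (leibIdeal br) := by
        rw [lcs_one_eq_map₂_of_isCompl br hW, map_map₂, ker_mkQ]
    _ ≤ (finrank K W).choose 2 + finrank K (leibIdeal br) := by
        gcongr
        exact (isAlt_compr₂_mkQ_leibIdeal br).finrank_map₂_le_choose_two W

theorem dim_derived_le_of_center_codim_general
    {A : Type*} [AddCommGroup A] [Module ℂ A] [FiniteDimensional ℂ A]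
    (br : A →ₗ[ℂ] A →ₗ[ℂ] A)
    (n k : ℕ) (hk : k ≤ n)
    (hdim : Module.finrank ℂ A = n)
    (hcenter : Module.finrank ℂ ↥(leibnizCenter br) = n - k)
    (hleib : Module.finrank ℂ ↥(leibIdeal br) = 1) :
    2 * Module.finrank ℂ ↥(lcs br 1) ≤ k ^ 2 - k + 2 := by
  have h := finrank_lcs_one_le_choose_two_add br
  rw [hdim, hcenter, hleib, Nat.sub_sub_self hk] at h
  have hchoose : 2 * k.choose 2 = k ^ 2 - k := by
    rw [Nat.choose_two_right, Nat.mul_div_cancel' k.even_mul_pred_self.two_dvd, Nat.mul_sub_one,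
      sq]
  omega

/-- If `A` is an `n`-dimensional nilpotent left Leibniz algebra over `ℂ` with
`dim Z(A) = n - k` and `dim Leib(A) = 1`, then `dim A² ≤ (k² - k + 2)/2`. -/
theorem dim_derived_le_of_center_codim
    {A : Type*} [AddCommGroup A] [Module ℂ A] [FiniteDimensional ℂ A]
    (br : A →ₗ[ℂ] A →ₗ[ℂ] A) (hbr : IsLeibnizBracket br)
    (hnil : ∃ m : ℕ, lcs br m = ⊥)
    (n k : ℕ) (hk : k ≤ n)
    (hdim : Module.finrank ℂ A = n)
    (hcenter : Module.finrank ℂ ↥(leibnizCenter br) = n - k)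
    (hleib : Module.finrank ℂ ↥(leibIdeal br) = 1) :
    2 * Module.finrank ℂ ↥(lcs br 1) ≤ k ^ 2 - k + 2 :=
  dim_derived_le_of_center_codim_general br n k hk hdim hcenter hleib
end

section
/- Let A be an n-dimensional nilpotent left Leibniz algebra over ℂ with dim A² = n − k, dim Leib(A) = 1, and dim A³ = t. Then n ≤ t + (k² + k + 2)/2. -/
/-!
Lift a basis of `A ⧸ A²` to vectors `x₁, …, x_q`, so that `A = span {xᵢ} + A²`. Since
`[A, A²] = A³` and, by the Leibniz identity, `[A², A] ⊆ A³`, the space `A²` is spanned modulo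
`A³` by the brackets `[xᵢ, xⱼ]`. Modulo `Leib(A)` the bracket is antisymmetric, because
`[a, b] + [b, a] = [a + b, a + b] - [a, a] - [b, b]`, so the `q(q-1)/2` brackets with `i < j`
together with `Leib(A)` already suffice: `dim A² ≤ dim A³ + dim Leib(A) + q(q-1)/2`, where
`q = dim A - dim A² ≤ k`.
-/

open Module Submodule

section Bracket

variable {K A : Type*} [CommRing K] [AddCommGroup A] [Module K A] (br : A →ₗ[K] A →ₗ[K] A)

theorem bracketSpan_eq_map₂ (S T : Submodule K A) : bracketSpan br S T = map₂ br S T := by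
  rw [map₂_eq_span_image2]
  rfl

theorem lcs_succ_eq_map₂ (n : ℕ) : lcs br (n + 1) = map₂ br ⊤ (lcs br n) :=
  bracketSpan_eq_map₂ br _ _

theorem bracket_add_bracket_swap_mem_leibIdeal_s9 (a b : A) : br a b + br b a ∈ leibIdeal br := by
  have hsq (c : A) : br c c ∈ leibIdeal br := subset_span ⟨c, rfl⟩
  have h : br a b + br b a = br (a + b) (a + b) - br a a - br b b := by
    simp only [map_add, LinearMap.add_apply]
    abel
  rw [h]
  exact sub_mem (sub_mem (hsq _) (hsq _)) (hsq _)

theorem map₂_lcs_one_top_le (hbr : IsLeibnizBracket br) :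
    map₂ br (lcs br 1) ⊤ ≤ lcs br 2 := by
  refine map₂_le.2 fun v hv c _ => ?_
  have hmem (a : A) {b : A} (hb : b ∈ lcs br 1) : br a b ∈ lcs br 2 :=
    subset_span ⟨a, trivial, b, hb, rfl⟩
  suffices lcs br 1 ≤ (lcs br 2).comap (br.flip c) from this hv
  refine span_le.2 ?_
  rintro _ ⟨a, -, b, -, rfl⟩
  rw [SetLike.mem_coe, mem_comap, LinearMap.flip_apply, eq_sub_of_add_eq (hbr a b c).symm]
  exact sub_mem (hmem a (subset_span ⟨b, trivial, c, trivial, rfl⟩))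
    (hmem b (subset_span ⟨a, trivial, c, trivial, rfl⟩))

variable {ι : Type*}

def orderedBracketSpan [LT ι] (x : ι → A) : Submodule K A :=
  span K (Set.range fun p : {p : ι × ι // p.1 < p.2} => br (x p.1.1) (x p.1.2))

theorem finrank_orderedBracketSpan_le [StrongRankCondition K] [Fintype ι] [LinearOrder ι]
    (x : ι → A) : finrank K (orderedBracketSpan br x) ≤ (Fintype.card ι).choose 2 := by
  classical
  calc finrank K (orderedBracketSpan br x) ≤ Fintype.card {p : ι × ι // p.1 < p.2} :=
        finrank_range_le_card _
    _ = (Fintype.card ι).choose 2 := by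
      rw [Fintype.card_subtype, Fintype.card_product_filter_lt]

variable [LinearOrder ι] (x : ι → A)

theorem bracket_mem_orderedBracketSpan_sup_leibIdeal (i j : ι) :
    br (x i) (x j) ∈ orderedBracketSpan br x ⊔ leibIdeal br := by
  have hlt {i j : ι} (h : i < j) : br (x i) (x j) ∈ orderedBracketSpan br x :=
    subset_span ⟨⟨(i, j), h⟩, rfl⟩
  rcases lt_trichotomy i j with h | rfl | h
  · exact mem_sup_left (hlt h)
  · exact mem_sup_right (subset_span ⟨x i, rfl⟩)
  · rw [← add_sub_cancel_right (br (x i) (x j)) (br (x j) (x i))]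
    exact sub_mem (mem_sup_right (bracket_add_bracket_swap_mem_leibIdeal_s9 br _ _))
      (mem_sup_left (hlt h))

theorem lcs_one_le_orderedBracketSpan_sup (hbr : IsLeibnizBracket br)
    (hx : span K (Set.range x) ⊔ lcs br 1 = ⊤) :
    lcs br 1 ≤ orderedBracketSpan br x ⊔ leibIdeal br ⊔ lcs br 2 := by
  set U := span K (Set.range x)
  have hUU : map₂ br U U ≤ orderedBracketSpan br x ⊔ leibIdeal br := by
    rw [map₂_span_span, span_le, Set.image2_subset_iff]
    rintro _ ⟨i, rfl⟩ _ ⟨j, rfl⟩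
    exact bracket_mem_orderedBracketSpan_sup_leibIdeal br x i j
  have hU1 : map₂ br U (lcs br 1) ≤ lcs br 2 :=
    (lcs_succ_eq_map₂ br 1).symm ▸ map₂_le_map₂_left le_top
  have h1U : map₂ br (lcs br 1) (U ⊔ lcs br 1) ≤ lcs br 2 :=
    (map₂_le_map₂_right le_top).trans (map₂_lcs_one_top_le br hbr)
  calc lcs br 1 = map₂ br (U ⊔ lcs br 1) (U ⊔ lcs br 1) := by
        rw [hx]
        exact lcs_succ_eq_map₂ br 0
    _ = map₂ br U U ⊔ map₂ br U (lcs br 1) ⊔ map₂ br (lcs br 1) (U ⊔ lcs br 1) := by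
      rw [map₂_sup_left, map₂_sup_right]
    _ ≤ _ := sup_le (sup_le (le_sup_of_le_left hUU) (le_sup_of_le_right hU1))
        (le_sup_of_le_right h1U)

end Bracket

section Dimension

variable {K A : Type*} [Field K] [AddCommGroup A] [Module K A] [FiniteDimensional K A]

theorem exists_span_range_sup_eq_top (p : Submodule K A) :
    ∃ x : Fin (finrank K (A ⧸ p)) → A, span K (Set.range x) ⊔ p = ⊤ := by
  let b := Module.finBasis K (A ⧸ p)
  refine ⟨Function.surjInv p.mkQ_surjective ∘ b, ?_⟩
  rw [sup_comm, ← map_mkQ_eq_top, map_span, ← Set.range_comp, ← Function.comp_assoc,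
    Function.comp_surjInv p.mkQ_surjective, Function.id_comp]
  exact b.span_eq

theorem finrank_lcs_one_le (br : A →ₗ[K] A →ₗ[K] A) (hbr : IsLeibnizBracket br) :
    finrank K (lcs br 1) ≤
      finrank K (lcs br 2) + finrank K (leibIdeal br) + (finrank K (A ⧸ lcs br 1)).choose 2 := by
  obtain ⟨x, hx⟩ := exists_span_range_sup_eq_top (lcs br 1)
  have hP := finrank_orderedBracketSpan_le br x
  rw [Fintype.card_fin] at hP
  calc finrank K (lcs br 1)
      ≤ finrank K ↥(orderedBracketSpan br x ⊔ leibIdeal br ⊔ lcs br 2) :=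
        finrank_mono (lcs_one_le_orderedBracketSpan_sup br x hbr hx)
    _ ≤ finrank K (orderedBracketSpan br x) + finrank K (leibIdeal br) + finrank K (lcs br 2) :=
        (finrank_add_le_finrank_add_finrank _ _).trans
          (Nat.add_le_add_right (finrank_add_le_finrank_add_finrank _ _) _)
    _ ≤ _ := by omega

end Dimension

theorem dim_le_of_derived_codim_general
    {A : Type*} [AddCommGroup A] [Module ℂ A] [FiniteDimensional ℂ A]
    (br : A →ₗ[ℂ] A →ₗ[ℂ] A) (hbr : IsLeibnizBracket br)
    (n k t : ℕ)
    (hdim : Module.finrank ℂ A = n)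
    (hA2 : Module.finrank ℂ ↥(lcs br 1) = n - k)
    (hleib : Module.finrank ℂ ↥(leibIdeal br) = 1)
    (hA3 : Module.finrank ℂ ↥(lcs br 2) = t) :
    2 * n ≤ 2 * t + k ^ 2 + k + 2 := by
  have hbound := finrank_lcs_one_le br hbr
  have hquot := (lcs br 1).finrank_quotient_add_finrank
  have hchoose : (finrank ℂ (A ⧸ lcs br 1)).choose 2 ≤ k.choose 2 :=
    Nat.choose_le_choose 2 (by omega)
  have htwice : 2 * k.choose 2 + k = k ^ 2 := by
    rw [Nat.choose_two_right, Nat.mul_div_cancel' k.even_mul_pred_self.two_dvd]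
    cases k with
    | zero => rfl
    | succ k => rw [Nat.add_sub_cancel]; ring
  omega

/-- If `A` is an `n`-dimensional nilpotent left Leibniz algebra over `ℂ` with
`dim A² = n - k`, `dim Leib(A) = 1` and `dim A³ = t`, then
`n ≤ t + (k² + k + 2)/2`. -/
theorem dim_le_of_derived_codim
    {A : Type*} [AddCommGroup A] [Module ℂ A] [FiniteDimensional ℂ A]
    (br : A →ₗ[ℂ] A →ₗ[ℂ] A) (hbr : IsLeibnizBracket br)
    (hnil : ∃ m : ℕ, lcs br m = ⊥)
    (n k t : ℕ) (hk : k ≤ n)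
    (hdim : Module.finrank ℂ A = n)
    (hA2 : Module.finrank ℂ ↥(lcs br 1) = n - k)
    (hleib : Module.finrank ℂ ↥(leibIdeal br) = 1)
    (hA3 : Module.finrank ℂ ↥(lcs br 2) = t) :
    2 * n ≤ 2 * t + k ^ 2 + k + 2 :=
  dim_le_of_derived_codim_general br hbr n k t hdim hA2 hleib hA3
end

section
/- Let A be a finite-dimensional non-split nilpotent left Leibniz algebra over ℂ with dim A² = 2 and dim A³ = 1. Then Z(A) = A³. -/
section Aux
variable {K A : Type*} [CommRing K] [AddCommGroup A] [Module K A]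
  (br : A →ₗ[K] A →ₗ[K] A)

lemma mem_bs {T : Submodule K A} (a : A) {t : A} (ht : t ∈ T) :
    br a t ∈ bracketSpan br ⊤ T :=
  Submodule.subset_span ⟨a, Submodule.mem_top, t, ht, rfl⟩

lemma bs_le {T U : Submodule K A} (h : ∀ a : A, ∀ t ∈ T, br a t ∈ U) :
    bracketSpan br ⊤ T ≤ U := by
  apply Submodule.span_le.2
  rintro x ⟨s, -, t, ht, rfl⟩
  exact h s t ht

lemma bs_mono {T T' : Submodule K A} (h : T ≤ T') :
    bracketSpan br ⊤ T ≤ bracketSpan br ⊤ T' :=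
  bs_le br fun a t ht => mem_bs br a (h ht)

lemma lcs_succ_le : ∀ n, lcs br (n+1) ≤ lcs br n
  | 0 => le_top
  | n+1 => bs_mono br (lcs_succ_le n)

lemma lcs_anti : ∀ {m n : ℕ}, m ≤ n → lcs br n ≤ lcs br m := by
  intro m n h
  induction n with
  | zero => simp_all
  | succ k ih =>
    rcases Nat.lt_or_ge m (k+1) with h' | h'
    · exact le_trans (lcs_succ_le br k) (ih (Nat.lt_succ_iff.mp h'))
    · have : m = k + 1 := le_antisymm h h'
      subst this; exact le_rfl

lemma lcs_stab (n : ℕ) (h : lcs br (n+1) = lcs br n) :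
    ∀ k, lcs br (n + k) = lcs br n := by
  intro k
  induction k with
  | zero => rfl
  | succ j ih =>
    show bracketSpan br ⊤ (lcs br (n + j)) = lcs br n
    rw [ih]; exact h

lemma mem_center_iff {z : A} :
    z ∈ leibnizCenter br ↔ ∀ a : A, br a z = 0 ∧ br z a = 0 := Iff.rfl

end Aux

section Aux2
variable {K A : Type*} [CommRing K] [AddCommGroup A] [Module K A]
  {br : A →ₗ[K] A →ₗ[K] A}

lemma br_lcs_lcs (hbr : IsLeibnizBracket br) :
    ∀ i j : ℕ, ∀ x ∈ lcs br i, ∀ y ∈ lcs br j, br x y ∈ lcs br (i + j + 1) := by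
  intro i
  induction i with
  | zero =>
    intro j x _ y hy
    rw [Nat.zero_add]
    exact mem_bs br x hy
  | succ i ih =>
    intro j x hx y hy
    have key : ∀ x' ∈ lcs br (i+1), br x' y ∈ lcs br (i + j + 2) := by
      intro x' hx'
      induction hx' using Submodule.span_induction with
      | mem u hu =>
        obtain ⟨s, -, t, ht, rfl⟩ := hu
        have h2 : br (br s t) y = br s (br t y) - br t (br s y) := by
          rw [hbr s t y]; abel
        rw [h2]
        have ha : br s (br t y) ∈ lcs br (i + j + 2) :=
          mem_bs br s (ih j t ht y hy)
        have hb : br t (br s y) ∈ lcs br (i + j + 2) := by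
          have : br t (br s y) ∈ lcs br (i + (j+1) + 1) :=
            ih (j+1) t ht (br s y) (mem_bs br s hy)
          simpa [show i + (j+1) + 1 = i + j + 2 by omega] using this
        exact Submodule.sub_mem _ ha hb
      | zero => simp
      | add u v _ _ hu hv => rw [map_add, LinearMap.add_apply]; exact Submodule.add_mem _ hu hv
      | smul c u _ hu => rw [map_smul, LinearMap.smul_apply]; exact Submodule.smul_mem _ _ hu
    have := key x hx
    simpa [show i + j + 2 = (i+1) + j + 1 by omega] using this
end Aux2

theorem center_eq_third_lcs'
    {A : Type*} [AddCommGroup A] [Module ℂ A] [FiniteDimensional ℂ A]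
    (br : A →ₗ[ℂ] A →ₗ[ℂ] A) (hbr : IsLeibnizBracket br)
    (hns : ¬ ∃ I J : Submodule ℂ A, IsLeibnizIdeal br I ∧ IsLeibnizIdeal br J ∧
      I ≠ ⊥ ∧ J ≠ ⊥ ∧ IsCompl I J)
    (hnil : ∃ m : ℕ, lcs br m = ⊥)
    (hA2 : Module.finrank ℂ ↥(lcs br 1) = 2)
    (hA3 : Module.finrank ℂ ↥(lcs br 2) = 1) :
    leibnizCenter br = lcs br 2 := by
  have h2ne : lcs br 2 ≠ ⊥ := by
    intro h; rw [h] at hA3; simp [finrank_bot] at hA3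
  -- Step 1: A⁴ = 0
  have h3 : lcs br 3 = ⊥ := by
    by_contra h3
    have hle : lcs br 3 ≤ lcs br 2 := lcs_succ_le br 2
    have h1 : Module.finrank ℂ ↥(lcs br 3) ≠ 0 := by
      simpa [Submodule.finrank_eq_zero] using h3
    have h2 : Module.finrank ℂ ↥(lcs br 3) ≤ 1 := hA3 ▸ Submodule.finrank_mono hle
    have heq : lcs br 3 = lcs br 2 :=
      Submodule.eq_of_le_of_finrank_le hle (by omega)
    obtain ⟨m, hm⟩ := hnil
    apply h2ne
    rcases le_or_gt m 2 with h | h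
    · exact le_bot_iff.mp (hm ▸ lcs_anti br h)
    · have := lcs_stab br 2 heq (m - 2)
      rw [show 2 + (m - 2) = m by omega, hm] at this
      exact this.symm
  -- Step 2: A³ ⊆ Z(A)
  have hsub : lcs br 2 ≤ leibnizCenter br := by
    intro z hz
    rw [mem_center_iff]
    intro a
    constructor
    · have : br a z ∈ lcs br 3 := mem_bs br a hz
      rwa [h3, Submodule.mem_bot] at this
    · have : br z a ∈ lcs br (2 + 0 + 1) := br_lcs_lcs hbr 2 0 z hz a Submodule.mem_top
      rwa [h3, Submodule.mem_bot] at this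
  -- A² is not contained in the center
  have hnc : ¬ lcs br 1 ≤ leibnizCenter br := by
    intro h
    apply h2ne
    apply le_bot_iff.mp
    apply bs_le br
    intro a t ht
    rw [Submodule.mem_bot]
    exact (((mem_center_iff br).mp (h ht)) a).1
  -- Step 3: Z(A) ⊆ A³
  have hZle : leibnizCenter br ≤ lcs br 2 := by
    intro z hzZ
    by_contra hz2
    by_cases hz1 : z ∈ lcs br 1
    · -- z ∈ A² \ A³ central : then A² ⊆ Z(A), contradiction
      have hlt : lcs br 2 < leibnizCenter br ⊓ lcs br 1 := by
        refine lt_of_le_of_ne (le_inf hsub (lcs_succ_le br 1)) fun he => ?_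
        exact hz2 (he ▸ Submodule.mem_inf.mpr ⟨hzZ, hz1⟩)
      have hgt : 1 < Module.finrank ℂ ↥(leibnizCenter br ⊓ lcs br 1) := by
        have := Submodule.finrank_lt_finrank_of_lt hlt
        omega
      have heq : leibnizCenter br ⊓ lcs br 1 = lcs br 1 :=
        Submodule.eq_of_le_of_finrank_le inf_le_right (by omega)
      exact hnc (by rw [← heq]; exact inf_le_left)
    · -- z central, z ∉ A² : A splits as ℂz ⊕ J, contradiction
      have hz0 : z ≠ 0 := fun h => hz2 (h ▸ Submodule.zero_mem _)
      obtain ⟨C, hC⟩ := Submodule.exists_isCompl (lcs br 1 ⊔ Submodule.span ℂ {z})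
      apply hns
      refine ⟨Submodule.span ℂ {z}, lcs br 1 ⊔ C, ?_, ?_, ?_, ?_, ?_⟩
      · intro a x hx
        obtain ⟨c, rfl⟩ := Submodule.mem_span_singleton.mp hx
        constructor
        · have : br a (c • z) = 0 := by
            rw [map_smul, ((mem_center_iff br).mp hzZ a).1, smul_zero]
          rw [this]; exact Submodule.zero_mem _
        · have : br (c • z) a = 0 := by
            rw [map_smul, LinearMap.smul_apply, ((mem_center_iff br).mp hzZ a).2, smul_zero]
          rw [this]; exact Submodule.zero_mem _
      · intro a x _
        constructor
        · exact (le_sup_left : lcs br 1 ≤ _) (mem_bs br a Submodule.mem_top)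
        · exact (le_sup_left : lcs br 1 ≤ _) (mem_bs br x Submodule.mem_top)
      · simpa [Submodule.span_singleton_eq_bot] using hz0
      · intro h
        have h1 : lcs br 1 = ⊥ :=
          le_bot_iff.mp (h ▸ (le_sup_left : lcs br 1 ≤ lcs br 1 ⊔ C))
        rw [h1] at hA2; simp [finrank_bot] at hA2
      · rw [isCompl_iff]
        constructor
        · rw [disjoint_iff, eq_bot_iff]
          intro x hx
          obtain ⟨hxs, hxJ⟩ := Submodule.mem_inf.mp hx
          obtain ⟨c, hc⟩ := Submodule.mem_span_singleton.mp hxs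
          obtain ⟨u, hu, w, hw, huw⟩ := Submodule.mem_sup.mp hxJ
          have hweq : w = c • z - u := by rw [hc, ← huw]; abel
          have hw' : w ∈ lcs br 1 ⊔ Submodule.span ℂ {z} := by
            rw [hweq]
            exact Submodule.sub_mem _
              ((le_sup_right : Submodule.span ℂ {z} ≤ _)
                (Submodule.smul_mem _ c (Submodule.mem_span_singleton_self z)))
              ((le_sup_left : lcs br 1 ≤ _) hu)
          have hw0 : w = 0 := Submodule.disjoint_def.mp hC.disjoint w hw' hw
          have hxu : x = u := by rw [← huw, hw0, add_zero]
          by_cases hc0 : c = 0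
          · rw [Submodule.mem_bot, ← hc, hc0, zero_smul]
          · exfalso
            apply hz1
            have : z = c⁻¹ • x := by rw [← hc, smul_smul, inv_mul_cancel₀ hc0, one_smul]
            rw [this, hxu]
            exact Submodule.smul_mem _ _ hu
        · rw [codisjoint_iff, ← sup_assoc,
            sup_comm (Submodule.span ℂ {z}) (lcs br 1)]
          exact codisjoint_iff.mp hC.codisjoint
  exact le_antisymm hZle hsub

/-- If `A` is a finite-dimensional non-split nilpotent left Leibniz algebra
over `ℂ` with `dim A² = 2` and `dim A³ = 1`, then `Z(A) = A³`. -/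
theorem center_eq_third_lcs
    {A : Type*} [AddCommGroup A] [Module ℂ A] [FiniteDimensional ℂ A]
    (br : A →ₗ[ℂ] A →ₗ[ℂ] A) (hbr : IsLeibnizBracket br)
    (hns : ¬ ∃ I J : Submodule ℂ A, IsLeibnizIdeal br I ∧ IsLeibnizIdeal br J ∧
      I ≠ ⊥ ∧ J ≠ ⊥ ∧ IsCompl I J)
    (hnil : ∃ m : ℕ, lcs br m = ⊥)
    (hA2 : Module.finrank ℂ ↥(lcs br 1) = 2)
    (hA3 : Module.finrank ℂ ↥(lcs br 2) = 1) :
    leibnizCenter br = lcs br 2 :=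
  center_eq_third_lcs' br hbr hns hnil hA2 hA3
end

section
/- For α ∈ ℂ, let 𝒜₁₂₉(α) be the Leibniz algebra on ℂ⁵ with basis x₁,…,x₅ and nonzero products [x₁,x₁] = x₄, [x₁,x₂] = α x₄, [x₂,x₁] = x₃, [x₂,x₃] = x₅, [x₁,x₄] = x₅. Then for every α ∈ ℂ, the algebras 𝒜₁₂₉(α) and 𝒜₁₂₉(−α) are isomorphic as Leibniz algebras. -/
/-- The `i`-th standard basis vector of `ℂ⁵`. -/
noncomputable def e (i : Fin 5) : Fin 5 → ℂ := Pi.single i 1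

/-- Structure constants of `𝒜₁₂₉(α)`: nonzero products `[x₁,x₁]=x₄`,
`[x₁,x₂]=α x₄`, `[x₂,x₁]=x₃`, `[x₂,x₃]=x₅`, `[x₁,x₄]=x₅`. -/
noncomputable def c129 (α : ℂ) (i j : Fin 5) : Fin 5 → ℂ :=
  if i = 0 ∧ j = 0 then e 3
  else if i = 0 ∧ j = 1 then α • e 3
  else if i = 1 ∧ j = 0 then e 2
  else if i = 1 ∧ j = 2 then e 4
  else if i = 0 ∧ j = 3 then e 4
  else 0


noncomputable def dsign : Fin 5 → ℂ := ![-1, 1, -1, 1, -1]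

lemma dsign_sq (i : Fin 5) : dsign i * dsign i = 1 := by
  fin_cases i <;> norm_num [dsign]

noncomputable def phi129 : (Fin 5 → ℂ) ≃ₗ[ℂ] (Fin 5 → ℂ) where
  toFun v := fun i => dsign i * v i
  invFun v := fun i => dsign i * v i
  map_add' v w := by funext i; simp [mul_add]
  map_smul' c v := by funext i; simp [Pi.smul_apply, smul_eq_mul]; ring
  left_inv v := by funext i; show dsign i * (dsign i * v i) = v i; rw [← mul_assoc, dsign_sq, one_mul]
  right_inv v := by funext i; show dsign i * (dsign i * v i) = v i; rw [← mul_assoc, dsign_sq, one_mul]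

lemma phi129_single (i : Fin 5) : phi129 (e i) = dsign i • e i := by
  funext k
  by_cases h : k = i
  · subst h; simp [phi129, e, Pi.single_apply]
  · simp [phi129, e, Pi.single_apply, Ne.symm h, h]

/-- For every `α ∈ ℂ`, the Leibniz algebras `𝒜₁₂₉(α)` and `𝒜₁₂₉(-α)` are
isomorphic: there is a linear equivalence intertwining the brackets. -/
theorem stmt18 (α : ℂ)
    (br₁ br₂ : (Fin 5 → ℂ) →ₗ[ℂ] (Fin 5 → ℂ) →ₗ[ℂ] (Fin 5 → ℂ))
    (h₁ : ∀ i j : Fin 5, br₁ (e i) (e j) = c129 α i j)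
    (h₂ : ∀ i j : Fin 5, br₂ (e i) (e j) = c129 (-α) i j) :
    ∃ φ : (Fin 5 → ℂ) ≃ₗ[ℂ] (Fin 5 → ℂ),
      ∀ a b : Fin 5 → ℂ, φ (br₁ a b) = br₂ (φ a) (φ b) := by
  refine ⟨phi129, fun a b => ?_⟩
  have key : ∀ i j : Fin 5, phi129 (br₁ (e i) (e j)) = br₂ (phi129 (e i)) (phi129 (e j)) := by
    intro i j
    rw [h₁, phi129_single, phi129_single, map_smul, map_smul, LinearMap.smul_apply, h₂]
    fin_cases i <;> fin_cases j <;>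
      · funext k
        fin_cases k <;>
          simp [c129, e, dsign, phi129, Pi.single_apply, Pi.smul_apply, smul_eq_mul]
  have ha : a = ∑ i : Fin 5, a i • e i := by
    funext k
    simp [e, Finset.sum_apply, Pi.smul_apply, Pi.single_apply]
  have hb : b = ∑ i : Fin 5, b i • e i := by
    funext k
    simp [e, Finset.sum_apply, Pi.smul_apply, Pi.single_apply]
  rw [ha, hb]
  simp only [map_sum, map_smul, LinearMap.sum_apply, LinearMap.smul_apply, key]
end
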